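/- Let 1 ≤ k ≤ n, A ∈ ℂ^{n×n}, and (a,b) ∈ ℝ². The following are equivalent: (a) a + ib ∈ Λ_k(A); (b) for every (t,x,y) ∈ ℝ³ with t + ax + by = 0, the Hermitian matrix t·I_n + x·Re A + y·Im A has at most n−k strictly positive eigenvalues (counted with multiplicity); (c) for every (t,x,y) ∈ ℝ³ with t + ax + by = 0, the matrix t·I_n + x·Re A + y·Im A has at most n−k strictly negative eigenvalues; (d) λ_{n−k+1}(x·Re A + y·Im A) ≤ ax + by for all (x,y) ∈ ℝ²; (e) λ_k(x·Re A + y·Im A) ≥ ax + by for all (x,y) ∈ ℝ²; (f) λ_k(Re A + y·Im A) ≥ a + by and λ_{n−k+1}(Re A + y·Im A) ≤ a + by for all y ∈ ℝ. -/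

import Mathlib

open Matrix

noncomputable section

/-- The Hermitian real part `(A + Aᴴ)/2` of a complex matrix. -/
def ReM {n : ℕ} (A : Matrix (Fin n) (Fin n) ℂ) : Matrix (Fin n) (Fin n) ℂ :=
  (2⁻¹ : ℂ) • (A + Aᴴ)

/-- The Hermitian imaginary part `(A - Aᴴ)/(2i)` of a complex matrix. -/
def ImM {n : ℕ} (A : Matrix (Fin n) (Fin n) ℂ) : Matrix (Fin n) (Fin n) ℂ :=
  ((2 * Complex.I)⁻¹ : ℂ) • (A - Aᴴ)

/-- The `k`-th largest eigenvalue (for `1 ≤ k ≤ n`) of a Hermitian `n × n` matrix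
(with junk value `0` for non-Hermitian input): the eigenvalues sorted in increasing
order, evaluated at index `n - k`. -/
def kthEig {n : ℕ} (M : Matrix (Fin n) (Fin n) ℂ) (k : ℕ) : ℝ :=
  if hM : M.IsHermitian then
    if h : n - k < n then (hM.eigenvalues ∘ Tuple.sort hM.eigenvalues) ⟨n - k, h⟩ else 0
  else 0

/-- `λ_k(x,y) = λ_k(x·Re A + y·Im A)`. -/
def lamXY {n : ℕ} (A : Matrix (Fin n) (Fin n) ℂ) (k : ℕ) (x y : ℝ) : ℝ :=
  kthEig ((x : ℂ) • ReM A + (y : ℂ) • ImM A) k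

/-- `λ_k(θ) = λ_k(cos θ · Re A + sin θ · Im A)`. -/
def lamTheta {n : ℕ} (A : Matrix (Fin n) (Fin n) ℂ) (k : ℕ) (θ : ℝ) : ℝ :=
  lamXY A k (Real.cos θ) (Real.sin θ)

/-- The rank-`k` numerical range, via the Li–Sze halfplane description:
`Λ_k(A) = {a + ib : a cos θ + b sin θ ≤ λ_k(θ) for all θ}`. -/
def NumRange {n : ℕ} (A : Matrix (Fin n) (Fin n) ℂ) (k : ℕ) : Set ℂ :=
  {z : ℂ | ∀ θ : ℝ, z.re * Real.cos θ + z.im * Real.sin θ ≤ lamTheta A k θ}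

/-- The matrix pencil `v₀·I + v₁·Re A + v₂·Im A`. -/
def pencil {n : ℕ} (A : Matrix (Fin n) (Fin n) ℂ) (v : Fin 3 → ℝ) :
    Matrix (Fin n) (Fin n) ℂ :=
  (v 0 : ℂ) • (1 : Matrix (Fin n) (Fin n) ℂ) + (v 1 : ℂ) • ReM A + (v 2 : ℂ) • ImM A

open scoped Classical in
/-- The number of strictly positive eigenvalues (with multiplicity) of a Hermitian matrix. -/
def posEigs {n : ℕ} (M : Matrix (Fin n) (Fin n) ℂ) : ℕ :=
  if hM : M.IsHermitian then (Finset.univ.filter fun i => 0 < hM.eigenvalues i).card else 0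

open scoped Classical in
/-- The number of strictly negative eigenvalues (with multiplicity) of a Hermitian matrix. -/
def negEigs {n : ℕ} (M : Matrix (Fin n) (Fin n) ℂ) : ℕ :=
  if hM : M.IsHermitian then (Finset.univ.filter fun i => hM.eigenvalues i < 0).card else 0

/-!
Write `λ↑` for the increasingly sorted spectrum of a Hermitian matrix, so `λ_k = λ↑_{n-k}`; all
conditions are reduced to (e). The pencil `t I + x Re A + y Im A` has spectrum
`t + spec(x Re A + y Im A)`, so counting its negative (positive) eigenvalues compares `-t` with
`λ_k` (with `λ_{n-k+1}`), which gives (c) ⇔ (e) and (b) ⇔ (d). The identity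
`λ_k(-M) = -λ_{n-k+1}(M)` gives (d) ⇔ (e); positive homogeneity of `(x, y) ↦ λ_k(x Re A + y Im A)`
and polar coordinates give (a) ⇔ (e). For (f) ⇒ (e), homogeneity covers `x ≠ 0`, and the line
`x = 0` is reached as a limit: `λ_k` is monotone for the Loewner order (min–max, by a dimension
count), so `λ_k(ε Re A + y Im A) ≤ λ_k(y Im A) + ε c` for any upper bound `c` of `spec(Re A)`.
-/

lemma Multiset.map_univ_val_comp_equiv {α β γ : Type*} [Fintype α] [Fintype β] (f : β → γ)
    (e : α ≃ β) : Finset.univ.val.map (f ∘ e) = Finset.univ.val.map f := by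
  rw [← Multiset.map_map, Multiset.map_univ_val_equiv]

open Finset in
lemma Monotone.card_filter_lt_le_iff {n : ℕ} {α : Type*} [LinearOrder α] {s : Fin n → α}
    (hs : Monotone s) (c : α) (j : Fin n) : #{i | s i < c} ≤ j ↔ c ≤ s j := by
  constructor
  · intro h
    by_contra! hlt
    have hsub : Iic j ⊆ univ.filter (fun i => s i < c) := fun i hi =>
      mem_filter.mpr ⟨mem_univ i, (hs (mem_Iic.mp hi)).trans_lt hlt⟩
    have := card_le_card hsub
    rw [Fin.card_Iic] at this
    omega
  · intro h
    calc #{i | s i < c} ≤ #(Iio j) := card_le_card fun i hi => mem_Iio.mpr <|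
          lt_of_not_ge fun hji => (h.trans (hs hji)).not_gt (mem_filter.mp hi).2
      _ = j := Fin.card_Iio j

open scoped InnerProductSpace in
lemma LinearMap.IsSymmetric.mul_norm_sq_le_re_inner_of_mem_span {𝕜 ι E : Type*} [RCLike 𝕜]
    [Fintype ι] [NormedAddCommGroup E] [InnerProductSpace 𝕜 E] {T : E →ₗ[𝕜] E}
    (hT : T.IsSymmetric) (b : OrthonormalBasis ι 𝕜 E) {μ : ι → ℝ}
    (hb : ∀ i, T (b i) = (μ i : 𝕜) • b i) {s : Set ι} {c : ℝ} (hc : ∀ i ∈ s, c ≤ μ i) {x : E}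
    (hx : x ∈ Submodule.span 𝕜 (b '' s)) :
    c * ‖x‖ ^ 2 ≤ RCLike.re ⟪x, T x⟫_𝕜 := by
  have hcoord : ∀ i ∉ s, ⟪b i, x⟫_𝕜 = 0 := fun i hi =>
    Submodule.mem_orthogonal_singleton_iff_inner_right.mp <| Submodule.span_le.mpr
      (by
        rintro _ ⟨p, hp, rfl⟩
        exact Submodule.mem_orthogonal_singleton_iff_inner_right.mpr
          (b.orthonormal.2 fun h => hi (h ▸ hp)))
      hx
  have hquad : RCLike.re ⟪x, T x⟫_𝕜 = ∑ i, μ i * ‖⟪b i, x⟫_𝕜‖ ^ 2 := by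
    rw [← b.sum_inner_mul_inner, map_sum]
    refine Finset.sum_congr rfl fun i _ => ?_
    rw [← hT, hb, inner_smul_left, RCLike.conj_ofReal, ← inner_conj_symm x, mul_left_comm,
      RCLike.conj_mul, ← RCLike.ofReal_pow, RCLike.re_ofReal_mul, RCLike.ofReal_re]
  rw [hquad, ← b.sum_sq_norm_inner_right, Finset.mul_sum]
  refine Finset.sum_le_sum fun i _ => ?_
  by_cases hi : i ∈ s
  · exact mul_le_mul_of_nonneg_right (hc i hi) (sq_nonneg _)
  · simp [hcoord i hi]

namespace Matrix.IsHermitian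

variable {ι : Type*} [DecidableEq ι] {M N : Matrix ι ι ℂ}

lemma smul_one_add_smul (hM : M.IsHermitian) (t r : ℝ) :
    ((t : ℂ) • 1 + (r : ℂ) • M).IsHermitian :=
  (isHermitian_one.smul (Complex.conj_ofReal t)).add (hM.smul (Complex.conj_ofReal r))

variable [Fintype ι]

open Polynomial in
lemma map_eigenvalues_of_charpoly_eq (hM : M.IsHermitian) {d : ι → ℝ}
    (h : M.charpoly = ∏ i, (X - C (d i : ℂ))) :
    Finset.univ.val.map hM.eigenvalues = Finset.univ.val.map d := by
  have hroots := hM.roots_charpoly_eq_eigenvalues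
  rw [h, roots_prod _ _ (by simp [Finset.prod_ne_zero_iff, X_sub_C_ne_zero])] at hroots
  simp only [roots_X_sub_C, Multiset.bind_singleton] at hroots
  refine Multiset.map_injective Complex.ofReal_injective ?_
  rw [Multiset.map_map, Multiset.map_map]
  exact hroots.symm

lemma map_eigenvalues_of_eq_smul_one_add_smul (hN : N.IsHermitian) (hM : M.IsHermitian)
    {t r : ℝ} (hNM : N = (t : ℂ) • 1 + (r : ℂ) • M) :
    Finset.univ.val.map hN.eigenvalues =
      Finset.univ.val.map (fun i => t + r * hM.eigenvalues i) := by
  refine hN.map_eigenvalues_of_charpoly_eq ?_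
  have hdiag : N = Unitary.conjStarAlgAut ℂ _ hM.eigenvectorUnitary
      (diagonal fun i => ((t + r * hM.eigenvalues i : ℝ) : ℂ)) := by
    have hD : (diagonal fun i => ((t + r * hM.eigenvalues i : ℝ) : ℂ))
        = (t : ℂ) • 1 + (r : ℂ) • diagonal (RCLike.ofReal ∘ hM.eigenvalues) := by
      ext i j
      by_cases hij : i = j <;> simp [hij]
    rw [hD, map_add, map_smul, map_one, map_smul, ← hM.spectral_theorem, hNM]
  rw [hdiag, Unitary.conjStarAlgAut_apply, charpoly_mul_comm, ← mul_assoc]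
  simp [charpoly_diagonal]

open scoped ComplexOrder in
lemma posSemidef_smul_one_sub (hM : M.IsHermitian) {c : ℝ} (hc : ∀ i, hM.eigenvalues i ≤ c) :
    ((c : ℂ) • 1 - M).PosSemidef := by
  have hNM : (c : ℂ) • 1 - M = (c : ℂ) • 1 + ((-1 : ℝ) : ℂ) • M := by simp [sub_eq_add_neg]
  have hN : ((c : ℂ) • 1 - M).IsHermitian := hNM ▸ hM.smul_one_add_smul c (-1)
  refine hN.posSemidef_iff_eigenvalues_nonneg.mpr fun i => ?_
  obtain ⟨j, -, hj⟩ := Multiset.mem_map.mp <|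
    hN.map_eigenvalues_of_eq_smul_one_add_smul hM hNM ▸ Multiset.mem_map_of_mem hN.eigenvalues
      (Finset.mem_univ i)
  rw [Pi.zero_apply, ← hj]
  linarith [hc j]

end Matrix.IsHermitian

namespace Matrix.IsHermitian

variable {n : ℕ} {M N : Matrix (Fin n) (Fin n) ℂ}

def sortedEigenvalues (hM : M.IsHermitian) : Fin n → ℝ :=
  hM.eigenvalues ∘ Tuple.sort hM.eigenvalues

lemma sortedEigenvalues_monotone (hM : M.IsHermitian) : Monotone hM.sortedEigenvalues :=
  Tuple.monotone_sort _

lemma map_sortedEigenvalues (hM : M.IsHermitian) :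
    Finset.univ.val.map hM.sortedEigenvalues = Finset.univ.val.map hM.eigenvalues :=
  Multiset.map_univ_val_comp_equiv _ _

lemma eq_sortedEigenvalues_of_monotone (hM : M.IsHermitian) {f : Fin n → ℝ} (hf : Monotone f)
    (h : Finset.univ.val.map f = Finset.univ.val.map hM.eigenvalues) :
    f = hM.sortedEigenvalues := by
  rw [← map_sortedEigenvalues, Fin.univ_val_map, Fin.univ_val_map] at h
  exact List.ofFn_injective <| (Multiset.coe_eq_coe.mp h).eq_of_sortedLE hf.sortedLE_ofFn
    hM.sortedEigenvalues_monotone.sortedLE_ofFn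

lemma sortedEigenvalues_of_eq_smul_one_add_smul (hN : N.IsHermitian) (hM : M.IsHermitian)
    {t r : ℝ} (hNM : N = (t : ℂ) • 1 + (r : ℂ) • M) (hr : 0 ≤ r) :
    hN.sortedEigenvalues = fun j => t + r * hM.sortedEigenvalues j := by
  refine (hN.eq_sortedEigenvalues_of_monotone (fun i j hij => ?_) ?_).symm
  · have := hM.sortedEigenvalues_monotone hij
    gcongr
  · rw [hN.map_eigenvalues_of_eq_smul_one_add_smul hM hNM]
    have h := congrArg (Multiset.map fun μ => t + r * μ) hM.map_sortedEigenvalues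
    rw [Multiset.map_map, Multiset.map_map] at h
    exact h

lemma sortedEigenvalues_of_eq_neg (hN : N.IsHermitian) (hM : M.IsHermitian) (hNM : N = -M)
    (j : Fin n) : hN.sortedEigenvalues j = -hM.sortedEigenvalues j.rev := by
  have hNM' : N = ((0 : ℝ) : ℂ) • 1 + ((-1 : ℝ) : ℂ) • M := by simp [hNM]
  refine congrFun (hN.eq_sortedEigenvalues_of_monotone (f := fun j => -hM.sortedEigenvalues j.rev)
    (fun i j hij => neg_le_neg (hM.sortedEigenvalues_monotone (Fin.rev_le_rev.mpr hij))) ?_).symm j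
  rw [hN.map_eigenvalues_of_eq_smul_one_add_smul hM hNM',
    show (fun j => -hM.sortedEigenvalues j.rev) = (Neg.neg ∘ hM.sortedEigenvalues) ∘ Fin.revPerm
      from rfl, Multiset.map_univ_val_comp_equiv, ← Multiset.map_map, map_sortedEigenvalues,
    Multiset.map_map]
  simp

open Finset in
lemma card_filter_eigenvalues_lt_le_iff (hM : M.IsHermitian) (c : ℝ) (j : Fin n) :
    #{i | hM.eigenvalues i < c} ≤ j ↔ c ≤ hM.sortedEigenvalues j := by
  have hcount := congrArg (Multiset.countP (· < c)) hM.map_sortedEigenvalues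
  rw [Multiset.countP_map, Multiset.countP_map] at hcount
  rw [← hM.sortedEigenvalues_monotone.card_filter_lt_le_iff]
  exact (congrArg (· ≤ (j : ℕ)) hcount).to_iff.symm

open scoped InnerProductSpace in
lemma exists_finrank_eq_forall_mul_norm_sq_le (hM : M.IsHermitian) (j : Fin n) :
    ∃ S : Submodule ℂ (EuclideanSpace ℂ (Fin n)), Module.finrank ℂ S = n - j ∧
      ∀ x ∈ S, hM.sortedEigenvalues j * ‖x‖ ^ 2 ≤ RCLike.re ⟪x, toEuclideanLin M x⟫_ℂ := by
  set b := hM.eigenvectorBasis.reindex (Tuple.sort hM.eigenvalues).symm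
  have hb : ∀ i, toEuclideanLin M (b i) = (hM.sortedEigenvalues i : ℂ) • b i := fun i => by
    rw [OrthonormalBasis.reindex_apply, Equiv.symm_symm]
    ext1 k
    rw [ofLp_toLpLin, toLin'_apply, hM.mulVec_eigenvectorBasis]
    simp only [sortedEigenvalues, Function.comp_apply, WithLp.ofLp_smul, Pi.smul_apply,
      Complex.real_smul, smul_eq_mul]
  refine ⟨Submodule.span ℂ (b '' Set.Ici j), ?_, fun x hx =>
    (isSymmetric_toEuclideanLin_iff.mpr hM).mul_norm_sq_le_re_inner_of_mem_span b hb
      (fun i hi => hM.sortedEigenvalues_monotone hi) hx⟩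
  rw [Set.image_eq_range, finrank_span_eq_card (b := fun i : Set.Ici j => b i)
    (b.orthonormal.linearIndependent.comp _ Subtype.val_injective), ← Set.toFinset_card,
    Set.toFinset_Ici, Fin.card_Ici]

open scoped InnerProductSpace ComplexOrder in
lemma sortedEigenvalues_le_of_posSemidef_sub (hM : M.IsHermitian) (hN : N.IsHermitian)
    (h : (N - M).PosSemidef) (j : Fin n) : hM.sortedEigenvalues j ≤ hN.sortedEigenvalues j := by
  -- the top `n - j` eigenvectors of `M` and the bottom `j + 1` of `N` span subspaces that meet
  obtain ⟨S, hS, hSM⟩ := hM.exists_finrank_eq_forall_mul_norm_sq_le j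
  obtain ⟨T, hT, hTN⟩ := hN.neg.exists_finrank_eq_forall_mul_norm_sq_le j.rev
  have hST : S ⊓ T ≠ ⊥ := by
    intro hbot
    have hsum := Submodule.finrank_sup_add_finrank_inf_eq S T
    have hle := (Submodule.finrank_le (S ⊔ T)).trans_eq finrank_euclideanSpace_fin
    rw [hbot, finrank_bot, hS, hT, Fin.val_rev] at hsum
    omega
  obtain ⟨x, hx, hx0⟩ := Submodule.exists_mem_ne_zero_of_ne_bot hST
  have hlow := hSM x (Submodule.mem_inf.mp hx).1
  have hhigh := hTN x (Submodule.mem_inf.mp hx).2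
  rw [hN.neg.sortedEigenvalues_of_eq_neg hN rfl, Fin.rev_rev, map_neg, LinearMap.neg_apply,
    inner_neg_right, map_neg, neg_mul, neg_le_neg_iff] at hhigh
  have hmid := (isPositive_toEuclideanLin_iff.mpr h).re_inner_nonneg_right x
  rw [map_sub, LinearMap.sub_apply, inner_sub_right, map_sub, sub_nonneg] at hmid
  exact le_of_mul_le_mul_right ((hlow.trans hmid).trans hhigh) (by positivity)

end Matrix.IsHermitian

section kthEig

variable {n : ℕ} {M N : Matrix (Fin n) (Fin n) ℂ} {k : ℕ}

lemma kthEig_eq_sortedEigenvalues (hM : M.IsHermitian) (hk : n - k < n) :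
    kthEig M k = hM.sortedEigenvalues ⟨n - k, hk⟩ := by
  rw [kthEig, dif_pos hM, dif_pos hk]
  rfl

lemma kthEig_smul_one_add_smul (hM : M.IsHermitian) (t : ℝ) {r : ℝ} (hr : 0 ≤ r)
    (hk : n - k < n) : kthEig ((t : ℂ) • 1 + (r : ℂ) • M) k = t + r * kthEig M k := by
  have hN := hM.smul_one_add_smul t r
  rw [kthEig_eq_sortedEigenvalues hN hk, kthEig_eq_sortedEigenvalues hM hk,
    hN.sortedEigenvalues_of_eq_smul_one_add_smul hM rfl hr]

lemma kthEig_neg (hM : M.IsHermitian) (hk1 : 1 ≤ k) (hkn : k ≤ n) :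
    kthEig (-M) k = -kthEig M (n - k + 1) := by
  rw [kthEig_eq_sortedEigenvalues hM.neg (by omega), kthEig_eq_sortedEigenvalues hM (by omega),
    hM.neg.sortedEigenvalues_of_eq_neg hM rfl]
  congr 3

open scoped ComplexOrder in
lemma kthEig_le_kthEig_of_posSemidef_sub (hM : M.IsHermitian) (hN : N.IsHermitian)
    (h : (N - M).PosSemidef) (k : ℕ) : kthEig M k ≤ kthEig N k := by
  by_cases hk : n - k < n
  · rw [kthEig_eq_sortedEigenvalues hM hk, kthEig_eq_sortedEigenvalues hN hk]
    exact hM.sortedEigenvalues_le_of_posSemidef_sub hN h _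
  · simp [kthEig, hM, hN, hk] -- both sides are the junk value `0`

lemma negEigs_le_iff (hM : M.IsHermitian) (hk : n - k < n) :
    negEigs M ≤ n - k ↔ 0 ≤ kthEig M k := by
  rw [negEigs, dif_pos hM, kthEig_eq_sortedEigenvalues hM hk]
  convert hM.card_filter_eigenvalues_lt_le_iff 0 ⟨n - k, hk⟩

lemma posEigs_eq_negEigs_neg (hM : M.IsHermitian) : posEigs M = negEigs (-M) := by
  have hmap := hM.neg.map_eigenvalues_of_eq_smul_one_add_smul hM (t := 0) (r := -1) (by simp)
  have hcount := congrArg (Multiset.countP (· < 0)) hmap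
  simp only [Multiset.countP_map, zero_add, neg_one_mul, Left.neg_neg_iff] at hcount
  rw [posEigs, negEigs, dif_pos hM, dif_pos hM.neg]
  -- `posEigs` and `negEigs` filter with the classical decidability instance
  convert hcount.symm using 2 <;> exact congrArg Finset.card (Finset.filter_congr_decidable _ _ _)

end kthEig

section pencil

variable {n k : ℕ} (A : Matrix (Fin n) (Fin n) ℂ)

lemma isHermitian_ReM : (ReM A).IsHermitian :=
  (isHermitian_add_transpose_self A).smul (by simp [IsSelfAdjoint])

lemma isHermitian_ImM : (ImM A).IsHermitian := by
  have hstar : star ((2 * Complex.I)⁻¹ : ℂ) = -(2 * Complex.I)⁻¹ := by simp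
  rw [ImM, IsHermitian, conjTranspose_smul, conjTranspose_sub, conjTranspose_conjTranspose, hstar,
    neg_smul, ← smul_neg, neg_sub]

lemma isHermitian_smul_ReM_add_smul_ImM (x y : ℝ) :
    ((x : ℂ) • ReM A + (y : ℂ) • ImM A).IsHermitian :=
  ((isHermitian_ReM A).smul (Complex.conj_ofReal x)).add
    ((isHermitian_ImM A).smul (Complex.conj_ofReal y))

lemma lamXY_smul (hk : n - k < n) (x y : ℝ) {r : ℝ} (hr : 0 ≤ r) :
    lamXY A k (r * x) (r * y) = r * lamXY A k x y := by
  have hM : ((↑(r * x) : ℂ) • ReM A + (↑(r * y) : ℂ) • ImM A)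
      = ((0 : ℝ) : ℂ) • 1 + (r : ℂ) • ((x : ℂ) • ReM A + (y : ℂ) • ImM A) := by
    push_cast
    module
  rw [lamXY, hM, kthEig_smul_one_add_smul (isHermitian_smul_ReM_add_smul_ImM A x y) 0 hr hk,
    zero_add, lamXY]

lemma lamXY_neg (hk1 : 1 ≤ k) (hkn : k ≤ n) (x y : ℝ) :
    lamXY A k (-x) (-y) = -lamXY A (n - k + 1) x y := by
  have hM : ((↑(-x) : ℂ) • ReM A + (↑(-y) : ℂ) • ImM A)
      = -((x : ℂ) • ReM A + (y : ℂ) • ImM A) := by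
    push_cast
    module
  rw [lamXY, hM, kthEig_neg (isHermitian_smul_ReM_add_smul_ImM A x y) hk1 hkn, lamXY]

lemma pencil_eq (t x y : ℝ) :
    pencil A ![t, x, y] = (t : ℂ) • 1 + ((1 : ℝ) : ℂ) • ((x : ℂ) • ReM A + (y : ℂ) • ImM A) := by
  simp [pencil, add_assoc]

lemma negEigs_pencil_le_iff (hk : n - k < n) (t x y : ℝ) :
    negEigs (pencil A ![t, x, y]) ≤ n - k ↔ -t ≤ lamXY A k x y := by
  have hM := isHermitian_smul_ReM_add_smul_ImM A x y
  rw [pencil_eq, negEigs_le_iff (hM.smul_one_add_smul t 1) hk,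
    kthEig_smul_one_add_smul hM t zero_le_one hk, one_mul, lamXY, neg_le_iff_add_nonneg']

lemma posEigs_pencil_le_iff (hk1 : 1 ≤ k) (hkn : k ≤ n) (t x y : ℝ) :
    posEigs (pencil A ![t, x, y]) ≤ n - k ↔ lamXY A (n - k + 1) x y ≤ -t := by
  have hneg : -pencil A ![t, x, y] = pencil A ![-t, -x, -y] := by
    simp only [pencil_eq]
    push_cast
    module
  rw [posEigs_eq_negEigs_neg ((pencil_eq A t x y).symm ▸
      (isHermitian_smul_ReM_add_smul_ImM A x y).smul_one_add_smul t 1), hneg,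
    negEigs_pencil_le_iff A (by omega), lamXY_neg A hk1 hkn, neg_neg, le_neg]

end pencil

lemma exists_eq_mul_cos_mul_sin (x y : ℝ) :
    ∃ r θ : ℝ, 0 ≤ r ∧ x = r * Real.cos θ ∧ y = r * Real.sin θ :=
  ⟨‖(x + y * Complex.I : ℂ)‖, Complex.arg (x + y * Complex.I), norm_nonneg _,
    by simp [Complex.norm_mul_cos_arg], by simp [Complex.norm_mul_sin_arg]⟩

section membership

variable {n k : ℕ} (A : Matrix (Fin n) (Fin n) ℂ) (a b : ℝ)

lemma mem_numRange_iff (hk : n - k < n) :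
    (a + b * Complex.I) ∈ NumRange A k ↔ ∀ x y : ℝ, a * x + b * y ≤ lamXY A k x y := by
  refine ⟨fun h x y => ?_, fun h θ => by simpa [lamTheta] using h (Real.cos θ) (Real.sin θ)⟩
  obtain ⟨r, θ, hr, rfl, rfl⟩ := exists_eq_mul_cos_mul_sin x y
  have hθ : a * Real.cos θ + b * Real.sin θ ≤ lamXY A k (Real.cos θ) (Real.sin θ) := by
    simpa [lamTheta] using h θ
  rw [lamXY_smul A hk _ _ hr]
  linarith [mul_le_mul_of_nonneg_left hθ hr]

open scoped ComplexOrder in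
lemma exists_lamXY_le_lamXY_zero_add (hk : n - k < n) :
    ∃ c : ℝ, ∀ ε y : ℝ, 0 ≤ ε → lamXY A k ε y ≤ lamXY A k 0 y + ε * c := by
  obtain ⟨c, hc⟩ := (Set.finite_range (isHermitian_ReM A).eigenvalues).bddAbove
  refine ⟨c, fun ε y hε => ?_⟩
  have hM₀ := isHermitian_smul_ReM_add_smul_ImM A 0 y
  have hsub : ((ε * c : ℝ) : ℂ) • 1 + ((1 : ℝ) : ℂ) • ((((0 : ℝ) : ℂ) • ReM A + (y : ℂ) • ImM A))
      - ((ε : ℂ) • ReM A + (y : ℂ) • ImM A) = ε • ((c : ℂ) • 1 - ReM A) := by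
    rw [Complex.coe_smul]
    push_cast
    module
  have hle := kthEig_le_kthEig_of_posSemidef_sub (isHermitian_smul_ReM_add_smul_ImM A ε y)
    (hM₀.smul_one_add_smul (ε * c) 1)
    (hsub ▸ ((isHermitian_ReM A).posSemidef_smul_one_sub fun i => hc ⟨i, rfl⟩).smul hε) k
  rw [kthEig_smul_one_add_smul hM₀ _ zero_le_one hk] at hle
  simp only [lamXY]
  linarith

lemma forall_posEigs_pencil_le_iff (hk1 : 1 ≤ k) (hkn : k ≤ n) :
    (∀ t x y : ℝ, t + a * x + b * y = 0 → posEigs (pencil A ![t, x, y]) ≤ n - k) ↔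
      ∀ x y : ℝ, lamXY A (n - k + 1) x y ≤ a * x + b * y := by
  refine ⟨fun h x y => ?_, fun h t x y ht => ?_⟩
  · simpa using (posEigs_pencil_le_iff A hk1 hkn (-(a * x + b * y)) x y).1 (h _ x y (by ring))
  · exact (posEigs_pencil_le_iff A hk1 hkn t x y).2 (by linarith [h x y])

lemma forall_negEigs_pencil_le_iff (hk : n - k < n) :
    (∀ t x y : ℝ, t + a * x + b * y = 0 → negEigs (pencil A ![t, x, y]) ≤ n - k) ↔
      ∀ x y : ℝ, a * x + b * y ≤ lamXY A k x y := by
  refine ⟨fun h x y => ?_, fun h t x y ht => ?_⟩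
  · simpa using (negEigs_pencil_le_iff A hk (-(a * x + b * y)) x y).1 (h _ x y (by ring))
  · exact (negEigs_pencil_le_iff A hk t x y).2 (by linarith [h x y])

lemma forall_lamXY_le_iff (hk1 : 1 ≤ k) (hkn : k ≤ n) :
    (∀ x y : ℝ, lamXY A (n - k + 1) x y ≤ a * x + b * y) ↔
      ∀ x y : ℝ, a * x + b * y ≤ lamXY A k x y := by
  refine ⟨fun h x y => ?_, fun h x y => ?_⟩
  · have hneg := lamXY_neg A hk1 hkn (-x) (-y)
    rw [neg_neg, neg_neg] at hneg
    linarith [h (-x) (-y)]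
  · linarith [h (-x) (-y), lamXY_neg A hk1 hkn x y]

open Filter Topology in
lemma le_lamXY_of_forall_one (hk1 : 1 ≤ k) (hkn : k ≤ n)
    (h : ∀ y : ℝ, a + b * y ≤ lamXY A k 1 y ∧ lamXY A (n - k + 1) 1 y ≤ a + b * y) (x y : ℝ) :
    a * x + b * y ≤ lamXY A k x y := by
  have hk : n - k < n := by omega
  have hline : ∀ x ≠ 0, ∀ y, a * x + b * y = x * (a + b * (y / x)) := fun x hx y => by
    field_simp
  have hpos : ∀ x > 0, ∀ y, a * x + b * y ≤ lamXY A k x y := fun x hx y => by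
    have hscale := lamXY_smul A hk 1 (y / x) hx.le
    rw [mul_one, mul_div_cancel₀ y hx.ne'] at hscale
    rw [hscale, hline x hx.ne']
    exact mul_le_mul_of_nonneg_left (h _).1 hx.le
  rcases lt_trichotomy x 0 with hx | rfl | hx
  · have hscale := lamXY_smul A hk (-1) (-(y / x)) (r := -x) (by linarith)
    rw [neg_mul_neg, mul_one, neg_mul_neg, mul_div_cancel₀ y hx.ne, lamXY_neg A hk1 hkn] at hscale
    rw [hscale, neg_mul_neg, hline x hx.ne]
    exact mul_le_mul_of_nonpos_left (h _).2 hx.le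
  · obtain ⟨c, hc⟩ := exists_lamXY_le_lamXY_zero_add A hk
    have hcont : Continuous fun ε : ℝ => lamXY A k 0 y + ε * (c - a) := by fun_prop
    have hlim : Tendsto (fun ε => lamXY A k 0 y + ε * (c - a)) (𝓝[>] 0) (𝓝 (lamXY A k 0 y)) := by
      simpa using (hcont.tendsto 0).mono_left nhdsWithin_le_nhds
    rw [mul_zero, zero_add]
    refine ge_of_tendsto hlim ?_
    filter_upwards [self_mem_nhdsWithin] with ε hε
    linarith [hpos ε hε y, hc ε y (le_of_lt hε)]
  · exact hpos x hx y

end membership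

/-- **membership test.** The six conditions (a)–(f) are equivalent. -/
theorem stmt5 {n k : ℕ} (hk1 : 1 ≤ k) (hkn : k ≤ n)
    (A : Matrix (Fin n) (Fin n) ℂ) (a b : ℝ) :
    List.TFAE
      [ (a + b * Complex.I) ∈ NumRange A k,
        ∀ t x y : ℝ, t + a * x + b * y = 0 → posEigs (pencil A ![t, x, y]) ≤ n - k,
        ∀ t x y : ℝ, t + a * x + b * y = 0 → negEigs (pencil A ![t, x, y]) ≤ n - k,
        ∀ x y : ℝ, lamXY A (n - k + 1) x y ≤ a * x + b * y,
        ∀ x y : ℝ, a * x + b * y ≤ lamXY A k x y,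
        ∀ y : ℝ, a + b * y ≤ lamXY A k 1 y ∧ lamXY A (n - k + 1) 1 y ≤ a + b * y ] := by
  have hk : n - k < n := by omega
  tfae_have 1 ↔ 5 := mem_numRange_iff A a b hk
  tfae_have 2 ↔ 4 := forall_posEigs_pencil_le_iff A a b hk1 hkn
  tfae_have 3 ↔ 5 := forall_negEigs_pencil_le_iff A a b hk
  tfae_have 4 ↔ 5 := forall_lamXY_le_iff A a b hk1 hkn
  tfae_have 5 → 6 := fun h y => ⟨by simpa using h 1 y, by simpa using tfae_4_iff_5.2 h 1 y⟩
  tfae_have 6 → 5 := le_lamXY_of_forall_one A a b hk1 hkn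
  tfae_finish

end
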